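/- arXiv:1504.01062 — 2 statements merged into one kernel-verified Lean document; each statement's English description precedes it below -/
import Mathlib

section
/- Let n ≥ 1, k ≥ 1, let F be a cdf which is continuous on ℝ, let G_1,…,G_m be cdfs, and let u_i, v_i : [0,1]^m → [0,1] (i = 1,…,k) be continuous functions, u_i non-decreasing and v_i non-increasing in each variable, with u_i(0,…,0) = 0, u_i(1,…,1) = 1, v_i(0,…,0) = 1 and v_i(1,…,1) = 0. Let α_i ≥ 0 and 0 ≤ θ_i ≤ 1 for i = 1,…,k, and define 𝒰(t) = ∏_{i=1}^k ((1−θ_i)u_i(t) + θ_i)^{α_i} and ϑ(t) = ∏_{i=1}^k (θ_i v_i(t))^{α_i} for t ∈ [0,1]^m. Let μ_j, ℓ_j, m_j, ν_j : [0,1]^m → EReal (j = 1,…,n) be continuous, with μ_j, m_j non-decreasing and ℓ_j, ν_j non-increasing in each variable, and assume 𝒰, ϑ, μ_j, ℓ_j, m_j, ν_j satisfy conditions (d3)–(d9) of Corollary 1.2, namely: if 𝒰(0,…,0) ≠ ϑ(0,…,0) then (𝒰(0,…,0) = 0 or μ_j(0,…,0) = ℓ_j(0,…,0) for all j) and (ϑ(0,…,0)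 = 0 or m_j(0,…,0) = ν_j(0,…,0) for all j); if 𝒰(0,…,0) = ϑ(0,…,0) ≠ 0 then μ_j(0,…,0) = ν_j(0,…,0) and m_j(0,…,0) = ℓ_j(0,…,0) for all j; ℓ_j(0,…,0) ≤ μ_j(0,…,0) for all j and if ϑ(0,…,0) ≠ 0 then m_j(1,…,1) ≤ ν_j(1,…,1) for all j; μ_n(1,…,1) ≥ sup{x : F(x) < 1} and ℓ_1(1,…,1) ≤ inf{x : F(x) > 0}; ϑ(1,…,1) = 0 or ν_j(1,…,1) = m_j(1,…,1) for all j; μ_j(1,…,1) = ℓ_{j+1}(1,…,1) for j = 1,…,n−1. Then, writing (·)(x) = (G_1(x),…,G_m(x)), the function H(x) = ∏_{i=1}^k ((1−θ_i)u_i(·)(x) + θ_i)^{α_i} · Σ_{j=1}^n (F̄(μ_j(·)(x)) − F̄(ℓ_j(·)(x))) − ∏_{i=1}^k (θ_i v_i(·)(x))^{α_i} · Σ_{j=1}^n (F̄(ν_j(·)(x)) − F̄(m_j(·)(x))) is a cdf. -/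
open Filter Topology Set BigOperators unitInterval

/-- A cumulative distribution function: non-decreasing, right-continuous,
tending to 0 at `-∞` and to 1 at `+∞`. -/
def IsCDF (F : ℝ → ℝ) : Prop :=
  Monotone F ∧ (∀ x : ℝ, ContinuousWithinAt F (Set.Ici x) x) ∧
    Tendsto F atBot (nhds 0) ∧ Tendsto F atTop (nhds 1)

/-- The extension of a cdf to the extended reals, with value 0 at `⊥` and 1 at `⊤`. -/
noncomputable def extCDF (F : ℝ → ℝ) (a : EReal) : ℝ :=
  if a = ⊥ then 0 else if a = ⊤ then 1 else F a.toReal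

/-- `𝒰(t) = ∏ i, ((1 - θ i) * u i t + θ i) ^ (α i)` (real powers). -/
noncomputable def prodU {k m : ℕ} (θ α : Fin k → ℝ)
    (u : Fin k → (Fin m → unitInterval) → ℝ) (t : Fin m → unitInterval) : ℝ :=
  ∏ i, ((1 - θ i) * u i t + θ i) ^ (α i)

/-- `ϑ(t) = ∏ i, (θ i * v i t) ^ (α i)` (real powers). -/
noncomputable def prodV {k m : ℕ} (θ α : Fin k → ℝ)
    (v : Fin k → (Fin m → unitInterval) → ℝ) (t : Fin m → unitInterval) : ℝ :=
  ∏ i, (θ i * v i t) ^ (α i)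


/-!
Put `Φ = 𝒰 S - ϑ T` on the cube `[0,1]^m`, where `S` and `T` are the two sums of
`F̄`-increments (`intervalMass`), so that `H = Φ ∘ (G₁, …, Gₘ)`. Since `(G₁, …, Gₘ)` is a
monotone, right-continuous path from `0` to `1` in the cube, `H` is a cdf as soon as `Φ` is
monotone, continuous, `Φ 0 = 0` and `Φ 1 = 1`. Continuity of `F` makes `F̄` continuous on
`EReal`, hence `Φ` continuous. The factors `𝒰`, `S` are monotone and non-negative and `ϑ`, `T`
antitone and non-negative (or `ϑ ≡ 0`), so `Φ` is monotone. At `0`, `𝒰 = ϑ` and, unless this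
is `0`, (d4) makes `S = T`; at `1`, `𝒰 = 1`, (d8) kills `ϑ T`, and by (d9) the sum `S`
telescopes to `F̄(μₙ(1)) - F̄(ℓ₁(1)) = 1 - 0` by (d6).
-/

namespace IsCDF

variable {F : ℝ → ℝ}

lemma nonneg (hF : IsCDF F) (x : ℝ) : 0 ≤ F x :=
  le_of_tendsto hF.2.2.1 (by filter_upwards [eventually_le_atBot x] with y hy using hF.1 hy)

lemma le_one (hF : IsCDF F) (x : ℝ) : F x ≤ 1 :=
  ge_of_tendsto hF.2.2.2 (by filter_upwards [eventually_ge_atTop x] with y hy using hF.1 hy)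

end IsCDF

section extCDF

variable {F : ℝ → ℝ}

@[simp] lemma extCDF_bot : extCDF F ⊥ = 0 := rfl

@[simp] lemma extCDF_top : extCDF F ⊤ = 1 := rfl

@[simp] lemma extCDF_coe (x : ℝ) : extCDF F x = F x := by
  simp [extCDF]

lemma monotone_extCDF (hF : IsCDF F) : Monotone (extCDF F) := by
  intro a b hab
  induction a using EReal.rec with
  | bot => induction b using EReal.rec <;> simp [hF.nonneg]
  | top => rw [top_le_iff.mp hab]
  | coe x =>
    induction b using EReal.rec with
    | bot => simp at hab
    | coe y => simpa using hF.1 (EReal.coe_le_coe_iff.mp hab)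
    | top => simpa using hF.le_one x

lemma tendsto_extCDF_bot (hF : IsCDF F) : Tendsto (extCDF F) (𝓝 ⊥) (𝓝 0) := by
  refine tendsto_order.2 ⟨fun c hc => Eventually.of_forall fun a =>
    hc.trans_le ((monotone_extCDF hF bot_le).trans_eq' rfl), fun ε hε => ?_⟩
  obtain ⟨x₀, hx₀⟩ := (hF.2.2.1.eventually (eventually_lt_nhds hε)).exists
  filter_upwards [Iio_mem_nhds (EReal.bot_lt_coe x₀)] with a ha
  exact (monotone_extCDF hF ha.le).trans_lt (by simpa using hx₀)

lemma tendsto_extCDF_top (hF : IsCDF F) : Tendsto (extCDF F) (𝓝 ⊤) (𝓝 1) := by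
  refine tendsto_order.2 ⟨fun c hc => ?_, fun c hc => Eventually.of_forall fun a =>
    ((monotone_extCDF hF le_top).trans_eq rfl).trans_lt hc⟩
  obtain ⟨x₀, hx₀⟩ := (hF.2.2.2.eventually (eventually_gt_nhds hc)).exists
  filter_upwards [Ioi_mem_nhds (EReal.coe_lt_top x₀)] with a ha
  exact (by simpa using hx₀ : c < extCDF F x₀).trans_le (monotone_extCDF hF ha.le)

lemma continuous_extCDF (hF : IsCDF F) (hFc : Continuous F) : Continuous (extCDF F) := by
  refine continuous_iff_continuousAt.2 fun a => ?_
  induction a using EReal.rec with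
  | bot => exact tendsto_extCDF_bot hF
  | top => exact tendsto_extCDF_top hF
  | coe x =>
    rw [← EReal.isOpenEmbedding_coe.continuousAt_iff]
    simpa [Function.comp_def] using hFc.continuousAt

lemma extCDF_eq_one_of_sSup_le (hF : IsCDF F) {M : EReal}
    (hM : sSup ((fun x : ℝ => (x : EReal)) '' {x | F x < 1}) ≤ M) : extCDF F M = 1 := by
  have hlt : ∀ x : ℝ, F x < 1 → (x : EReal) ≤ M := fun x hx => hM.trans' (le_sSup ⟨x, hx, rfl⟩)
  have hge : ∀ x : ℝ, M < x → F x = 1 := fun x hx =>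
    (hF.le_one x).antisymm (not_lt.1 fun h => (hlt x h).not_gt hx)
  induction M using EReal.rec with
  | top => rfl
  | bot =>
    refine absurd (tendsto_nhds_unique hF.2.2.1 ?_) zero_ne_one
    exact tendsto_const_nhds.congr fun x => (hge x (EReal.bot_lt_coe x)).symm
  | coe a =>
    have hright : Tendsto F (𝓝[>] a) (𝓝 1) :=
      tendsto_const_nhds.congr' (eventually_nhdsWithin_of_forall fun x hx =>
        (hge x (EReal.coe_lt_coe_iff.2 hx)).symm)
    simpa using tendsto_nhds_unique ((hF.2.1 a).mono Ioi_subset_Ici_self) hright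

lemma extCDF_eq_zero_of_le_sInf (hF : IsCDF F) (hFc : Continuous F) {L : EReal}
    (hL : L ≤ sInf ((fun x : ℝ => (x : EReal)) '' {x | 0 < F x})) : extCDF F L = 0 := by
  have hle : ∀ x : ℝ, 0 < F x → L ≤ x := fun x hx => hL.trans (sInf_le ⟨x, hx, rfl⟩)
  have hlt : ∀ x : ℝ, (x : EReal) < L → F x = 0 := fun x hx =>
    (not_lt.1 fun h => (hle x h).not_gt hx).antisymm (hF.nonneg x)
  induction L using EReal.rec with
  | bot => rfl
  | top =>
    refine absurd (tendsto_nhds_unique hF.2.2.2 ?_) one_ne_zero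
    exact tendsto_const_nhds.congr fun x => (hlt x (EReal.coe_lt_top x)).symm
  | coe a =>
    have hleft : Tendsto F (𝓝[<] a) (𝓝 0) :=
      tendsto_const_nhds.congr' (eventually_nhdsWithin_of_forall fun x hx =>
        (hlt x (EReal.coe_lt_coe_iff.2 hx)).symm)
    simpa using tendsto_nhds_unique (hFc.continuousAt.tendsto.mono_left nhdsWithin_le_nhds) hleft

end extCDF

lemma Fin.sum_sub_of_chain {M : Type*} [AddCommGroup M] {n : ℕ} (hn : 0 < n) {a b : Fin n → M}
    (h : ∀ (j : Fin n) (hj : (j : ℕ) + 1 < n), b j = a ⟨j + 1, hj⟩) :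
    ∑ j, (b j - a j) = b ⟨n - 1, by omega⟩ - a ⟨0, hn⟩ := by
  let f : ℕ → M := fun j => if hj : j < n then a ⟨j, hj⟩ else b ⟨n - 1, by omega⟩
  have hterm : ∀ j : Fin n, b j - a j = f (j + 1) - f j := by
    intro j
    by_cases hj : (j : ℕ) + 1 < n
    · simp [f, hj, h j hj]
    · have : j = ⟨n - 1, by omega⟩ := Fin.ext (show (j : ℕ) = n - 1 by omega)
      simp [f, hj, ← this]
  rw [Finset.sum_congr rfl fun j _ => hterm j, Fin.sum_univ_eq_sum_range (fun j => f (j + 1) - f j),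
    Finset.sum_range_sub]
  simp [f, hn]

noncomputable def intervalMass {X : Type*} {n : ℕ} (F : ℝ → ℝ) (b a : Fin n → X → EReal)
    (t : X) : ℝ :=
  ∑ j, (extCDF F (b j t) - extCDF F (a j t))

section intervalMass

variable {X : Type*} {n : ℕ} {F : ℝ → ℝ} {b a : Fin n → X → EReal}

lemma intervalMass_nonneg (hF : IsCDF F) {t : X} (h : ∀ j, a j t ≤ b j t) :
    0 ≤ intervalMass F b a t :=
  Finset.sum_nonneg fun j _ => sub_nonneg.2 (monotone_extCDF hF (h j))

lemma monotone_intervalMass [Preorder X] (hF : IsCDF F) (hb : ∀ j, Monotone (b j))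
    (ha : ∀ j, Antitone (a j)) : Monotone (intervalMass F b a) := fun _ _ hst =>
  Finset.sum_le_sum fun j _ =>
    sub_le_sub (monotone_extCDF hF (hb j hst)) (monotone_extCDF hF (ha j hst))

lemma antitone_intervalMass [Preorder X] (hF : IsCDF F) (hb : ∀ j, Antitone (b j))
    (ha : ∀ j, Monotone (a j)) : Antitone (intervalMass F b a) := fun _ _ hst =>
  Finset.sum_le_sum fun j _ =>
    sub_le_sub (monotone_extCDF hF (hb j hst)) (monotone_extCDF hF (ha j hst))

lemma continuous_intervalMass [TopologicalSpace X] (hF : IsCDF F) (hFc : Continuous F)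
    (hb : ∀ j, Continuous (b j)) (ha : ∀ j, Continuous (a j)) :
    Continuous (intervalMass F b a) :=
  continuous_finsetSum _ fun j _ =>
    ((continuous_extCDF hF hFc).comp (hb j)).sub ((continuous_extCDF hF hFc).comp (ha j))

lemma intervalMass_eq_one (hF : IsCDF F) (hFc : Continuous F) (hn : 0 < n) {t : X}
    (hchain : ∀ (j : Fin n) (hj : (j : ℕ) + 1 < n), b j t = a ⟨j + 1, hj⟩ t)
    (htop : sSup ((fun x : ℝ => (x : EReal)) '' {x | F x < 1}) ≤ b ⟨n - 1, by omega⟩ t)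
    (hbot : a ⟨0, hn⟩ t ≤ sInf ((fun x : ℝ => (x : EReal)) '' {x | 0 < F x})) :
    intervalMass F b a t = 1 := by
  rw [intervalMass, Fin.sum_sub_of_chain hn fun j hj => congrArg (extCDF F) (hchain j hj),
    extCDF_eq_one_of_sSup_le hF htop, extCDF_eq_zero_of_le_sInf hF hFc hbot, sub_zero]

end intervalMass

section prodUV

variable {k m : ℕ} {θ α : Fin k → ℝ} {u v : Fin k → (Fin m → I) → ℝ}

lemma prodU_nonneg (hθ : ∀ i, θ i ∈ I) (hu : ∀ i t, 0 ≤ u i t) (t : Fin m → I) :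
    0 ≤ prodU θ α u t :=
  Finset.prod_nonneg fun i _ => Real.rpow_nonneg
    (add_nonneg (mul_nonneg (sub_nonneg.2 (hθ i).2) (hu i t)) (hθ i).1) _

lemma monotone_prodU (hθ : ∀ i, θ i ∈ I) (hα : ∀ i, 0 ≤ α i) (hu : ∀ i t, 0 ≤ u i t)
    (humono : ∀ i, Monotone (u i)) : Monotone (prodU θ α u) := fun s _ hst =>
  Finset.prod_le_prod
    (fun i _ => Real.rpow_nonneg
      (add_nonneg (mul_nonneg (sub_nonneg.2 (hθ i).2) (hu i s)) (hθ i).1) _)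
    fun i _ => Real.rpow_le_rpow
      (add_nonneg (mul_nonneg (sub_nonneg.2 (hθ i).2) (hu i s)) (hθ i).1)
      (add_le_add_left (mul_le_mul_of_nonneg_left (humono i hst) (sub_nonneg.2 (hθ i).2)) _)
      (hα i)

lemma continuous_prodU (hα : ∀ i, 0 ≤ α i) (huc : ∀ i, Continuous (u i)) :
    Continuous (prodU θ α u) :=
  continuous_finsetProd _ fun i _ =>
    ((continuous_const.mul (huc i)).add continuous_const).rpow_const fun _ => Or.inr (hα i)

lemma prodU_one (hu1 : ∀ i, u i 1 = 1) : prodU θ α u 1 = 1 :=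
  Finset.prod_eq_one fun i _ => by rw [hu1, mul_one, sub_add_cancel, Real.one_rpow]

lemma prodU_zero_eq_prodV_zero (hu0 : ∀ i, u i 0 = 0) (hv0 : ∀ i, v i 0 = 1) :
    prodU θ α u 0 = prodV θ α v 0 :=
  Finset.prod_congr rfl fun i _ => by rw [hu0, hv0, mul_zero, zero_add, mul_one]

lemma prodV_nonneg (hθ : ∀ i, 0 ≤ θ i) (hv : ∀ i t, 0 ≤ v i t) (t : Fin m → I) :
    0 ≤ prodV θ α v t :=
  Finset.prod_nonneg fun i _ => Real.rpow_nonneg (mul_nonneg (hθ i) (hv i t)) _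

lemma antitone_prodV (hθ : ∀ i, 0 ≤ θ i) (hα : ∀ i, 0 ≤ α i) (hv : ∀ i t, 0 ≤ v i t)
    (hvanti : ∀ i, Antitone (v i)) : Antitone (prodV θ α v) := fun _ t hst =>
  Finset.prod_le_prod (fun i _ => Real.rpow_nonneg (mul_nonneg (hθ i) (hv i t)) _)
    fun i _ => Real.rpow_le_rpow (mul_nonneg (hθ i) (hv i t))
      (mul_le_mul_of_nonneg_left (hvanti i hst) (hθ i)) (hα i)

lemma continuous_prodV (hα : ∀ i, 0 ≤ α i) (hvc : ∀ i, Continuous (v i)) :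
    Continuous (prodV θ α v) :=
  continuous_finsetProd _ fun i _ =>
    (continuous_const.mul (hvc i)).rpow_const fun _ => Or.inr (hα i)

lemma antitone_prodV_mul (hθ : ∀ i, 0 ≤ θ i) (hα : ∀ i, 0 ≤ α i) (hv : ∀ i t, 0 ≤ v i t)
    (hvanti : ∀ i, Antitone (v i)) {T : (Fin m → I) → ℝ} (hT : Antitone T)
    (hT0 : prodV θ α v 0 ≠ 0 → ∀ t, 0 ≤ T t) :
    Antitone fun t => prodV θ α v t * T t := by
  by_cases hV0 : prodV θ α v 0 = 0
  · have hV : ∀ t, prodV θ α v t = 0 := fun t =>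
      ((antitone_prodV hθ hα hv hvanti fun _ => unitInterval.nonneg').trans_eq hV0).antisymm
        (prodV_nonneg hθ hv t)
    simpa only [hV, zero_mul] using antitone_const
  · exact fun s t hst => mul_le_mul (antitone_prodV hθ hα hv hvanti hst) (hT hst)
      (hT0 hV0 t) (prodV_nonneg hθ hv s)

end prodUV

lemma isCDF_comp_of_cube {m : ℕ} {Φ : (Fin m → I) → ℝ} (hΦm : Monotone Φ) (hΦc : Continuous Φ)
    (hΦ0 : Φ 0 = 0) (hΦ1 : Φ 1 = 1) {g : ℝ → Fin m → I} (hg : ∀ i, IsCDF fun x => (g x i : ℝ)) :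
    IsCDF fun x => Φ (g x) := by
  have hgm : Monotone g := fun _ _ hxy i => Subtype.coe_le_coe.1 ((hg i).1 hxy)
  refine ⟨hΦm.comp hgm, fun x => hΦc.continuousAt.comp_continuousWithinAt
    (continuousWithinAt_pi.2 fun i => tendsto_subtype_rng.2 ((hg i).2.1 x)), ?_, ?_⟩
  · simpa [hΦ0, Function.comp_def] using (hΦc.tendsto 0).comp
      (tendsto_pi_nhds.2 fun i => tendsto_subtype_rng.2 (hg i).2.2.1)
  · simpa [hΦ1, Function.comp_def] using (hΦc.tendsto 1).comp
      (tendsto_pi_nhds.2 fun i => tendsto_subtype_rng.2 (hg i).2.2.2)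

/-- First special case of Corollary 1.2: an easy to use method for the
construction of classes of probability distributions. -/
theorem stmt_3
    (n k m : ℕ) (hn : 1 ≤ n)
    (F : ℝ → ℝ) (hF : IsCDF F) (hFc : Continuous F)
    (G : Fin m → ℝ → ℝ) (hG : ∀ i, IsCDF (G i))
    (hG01 : ∀ i (x : ℝ), G i x ∈ unitInterval)
    (u v : Fin k → (Fin m → unitInterval) → ℝ)
    (huc : ∀ i, Continuous (u i)) (hvc : ∀ i, Continuous (v i))
    (hu01 : ∀ i t, u i t ∈ unitInterval) (hv01 : ∀ i t, v i t ∈ unitInterval)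
    (humono : ∀ i, Monotone (u i)) (hvanti : ∀ i, Antitone (v i))
    (hu0 : ∀ i, u i 0 = 0) (hu1 : ∀ i, u i 1 = 1)
    (hv0 : ∀ i, v i 0 = 1)
    (α θ : Fin k → ℝ) (hα : ∀ i, 0 ≤ α i) (hθ : ∀ i, θ i ∈ unitInterval)
    (μ ℓ mm ν : Fin n → (Fin m → unitInterval) → EReal)
    (hμc : ∀ j, Continuous (μ j)) (hℓc : ∀ j, Continuous (ℓ j))
    (hmc : ∀ j, Continuous (mm j)) (hνc : ∀ j, Continuous (ν j))
    (d2μ : ∀ j, Monotone (μ j)) (d2m : ∀ j, Monotone (mm j))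
    (d2ν : ∀ j, Antitone (ν j)) (d2ℓ : ∀ j, Antitone (ℓ j))
    (d4 : prodU θ α u 0 = prodV θ α v 0 → prodU θ α u 0 ≠ 0 →
      ∀ j, μ j 0 = ν j 0 ∧ mm j 0 = ℓ j 0)
    (d5a : ∀ j, ℓ j 0 ≤ μ j 0)
    (d5b : prodV θ α v 0 ≠ 0 → ∀ j, mm j 1 ≤ ν j 1)
    (d6a : sSup ((fun x : ℝ => (x : EReal)) '' {x | F x < 1}) ≤ μ ⟨n - 1, by omega⟩ 1)
    (d6b : ℓ ⟨0, by omega⟩ 1 ≤ sInf ((fun x : ℝ => (x : EReal)) '' {x | 0 < F x}))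
    (d8 : prodV θ α v 1 = 0 ∨ ∀ j, ν j 1 = mm j 1)
    (d9 : ∀ j : Fin n, ∀ h : (j : ℕ) + 1 < n, μ j 1 = ℓ ⟨(j : ℕ) + 1, h⟩ 1) :
    IsCDF (fun x =>
      prodU θ α u (fun i => ⟨G i x, hG01 i x⟩) *
          ∑ j, (extCDF F (μ j (fun i => ⟨G i x, hG01 i x⟩))
            - extCDF F (ℓ j (fun i => ⟨G i x, hG01 i x⟩)))
        - prodV θ α v (fun i => ⟨G i x, hG01 i x⟩) *
          ∑ j, (extCDF F (ν j (fun i => ⟨G i x, hG01 i x⟩))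
            - extCDF F (mm j (fun i => ⟨G i x, hG01 i x⟩)))) := by
  have hθ0 : ∀ i, 0 ≤ θ i := fun i => (hθ i).1
  have hu : ∀ i t, 0 ≤ u i t := fun i t => (hu01 i t).1
  have hv : ∀ i t, 0 ≤ v i t := fun i t => (hv01 i t).1
  have h0 : ∀ t : Fin m → I, 0 ≤ t := fun _ _ => unitInterval.nonneg'
  have h1 : ∀ t : Fin m → I, t ≤ 1 := fun _ _ => unitInterval.le_one'
  have hS : ∀ t, 0 ≤ intervalMass F μ ℓ t := fun t => intervalMass_nonneg hF fun j =>
    (d2ℓ j (h0 t)).trans ((d5a j).trans (d2μ j (h0 t)))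
  have hT : prodV θ α v 0 ≠ 0 → ∀ t, 0 ≤ intervalMass F ν mm t := fun hV0 t =>
    intervalMass_nonneg hF fun j => (d2m j (h1 t)).trans ((d5b hV0 j).trans (d2ν j (h1 t)))
  refine isCDF_comp_of_cube
    (Φ := fun t => prodU θ α u t * intervalMass F μ ℓ t - prodV θ α v t * intervalMass F ν mm t)
    (fun s t hst => sub_le_sub
      ((monotone_prodU hθ hα hu humono).mul (monotone_intervalMass hF d2μ d2ℓ)
        (prodU_nonneg hθ hu) hS hst)
      (antitone_prodV_mul hθ0 hα hv hvanti (antitone_intervalMass hF d2ν d2m) hT hst))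
    (((continuous_prodU hα huc).mul (continuous_intervalMass hF hFc hμc hℓc)).sub
      ((continuous_prodV hα hvc).mul (continuous_intervalMass hF hFc hνc hmc)))
    ?_ ?_ (g := fun x i => ⟨G i x, hG01 i x⟩) hG
  · have hUV := prodU_zero_eq_prodV_zero (θ := θ) (α := α) hu0 hv0
    by_cases hU0 : prodU θ α u 0 = 0
    · simp only [hU0, ← hUV, zero_mul, sub_zero]
    · have hST : intervalMass F μ ℓ 0 = intervalMass F ν mm 0 :=
        Finset.sum_congr rfl fun j _ => by rw [(d4 hUV hU0 j).1, (d4 hUV hU0 j).2]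
      simp only [hUV, hST, sub_self]
  · have hVT : prodV θ α v 1 * intervalMass F ν mm 1 = 0 := by
      rcases d8 with hV1 | hνm
      · rw [hV1, zero_mul]
      · rw [intervalMass, Finset.sum_eq_zero fun j _ => by rw [hνm j, sub_self], mul_zero]
    simp only [prodU_one hu1, intervalMass_eq_one hF hFc hn d9 d6a d6b, hVT, mul_one, sub_zero]
end

section
/- Let η ≥ 1, let φ be a cdf, and let 𝕌, 𝕎 : ℝ → ℝ and 𝕌_j, 𝕃_j, 𝕄_j, 𝕍_j : ℝ → EReal (j = 1,…,η) be functions such that: 𝕌 and 𝕎 are non-negative; 𝕌, each 𝕌_j and each 𝕄_j are non-decreasing, and 𝕎, each 𝕍_j and each 𝕃_j are non-increasing; lim_{x→+∞} 𝕄_j(x) ≤ lim_{x→+∞} 𝕍_j(x) for all j; and if lim_{x→+∞} 𝕌(x) ≠ 0 then lim_{x→−∞} 𝕃_j(x) ≤ lim_{x→−∞} 𝕌_j(x) for all j. Then the function L(x) = 𝕎(x)·Σ_{j=1}^η (φ̄(𝕍_j(x)) − φ̄(𝕄_j(x))) − 𝕌(x)·Σ_{j=1}^η (φ̄(𝕌_j(x))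 − φ̄(𝕃_j(x))) is non-increasing on ℝ. -/
open Filter Topology Set BigOperators

lemma extCDF_mono {F : ℝ → ℝ} (hF : IsCDF F) : Monotone (extCDF F) := by
  obtain ⟨hmono, _, hbot, htop⟩ := hF
  have h0 : ∀ t, 0 ≤ F t := fun t =>
    hmono.le_of_tendsto hbot t
  have h1 : ∀ t, F t ≤ 1 := fun t =>
    hmono.ge_of_tendsto htop t
  intro a b hab
  unfold extCDF
  rcases eq_or_ne a ⊥ with rfl | ha
  · simp only [if_pos rfl]
    split_ifs <;> first | rfl | exact h0 _ | norm_num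
  · have hb : b ≠ ⊥ := fun h => ha (le_bot_iff.mp (h ▸ hab))
    rcases eq_or_ne b ⊤ with rfl | hb'
    · simp only [if_neg ha, if_neg hb, if_pos rfl]
      split_ifs <;> first | rfl | exact h1 _ | norm_num
    · have ha' : a ≠ ⊤ := fun h => hb' (top_le_iff.mp (h ▸ hab))
      simp only [if_neg ha, if_neg hb, if_neg ha', if_neg hb']
      exact hmono (EReal.toReal_le_toReal hab ha hb')

/-- Step from the proof of Corollary 1.1: the function
`L(x) = 𝕎(x)·Σⱼ (φ̄(𝕍ⱼ(x)) − φ̄(𝕄ⱼ(x))) − 𝕌(x)·Σⱼ (φ̄(𝕌ⱼ(x)) − φ̄(𝕃ⱼ(x)))`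
is non-increasing. -/
theorem stmt_19
    (η : ℕ) (hη : 1 ≤ η)
    (φ : ℝ → ℝ) (hφ : IsCDF φ)
    (U W : ℝ → ℝ) (Uj Lj Mj Vj : Fin η → ℝ → EReal)
    (cc1U : ∀ x, 0 ≤ U x) (cc1W : ∀ x, 0 ≤ W x)
    (cc2U : Monotone U) (cc2Uj : ∀ j, Monotone (Uj j)) (cc2Mj : ∀ j, Monotone (Mj j))
    (cc2W : Antitone W) (cc2Vj : ∀ j, Antitone (Vj j)) (cc2Lj : ∀ j, Antitone (Lj j))
    (uTop : ℝ) (UjBot LjBot MjTop VjTop : Fin η → EReal)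
    (hU_top : Tendsto U atTop (nhds uTop))
    (hUj_bot : ∀ j, Tendsto (Uj j) atBot (nhds (UjBot j)))
    (hLj_bot : ∀ j, Tendsto (Lj j) atBot (nhds (LjBot j)))
    (hMj_top : ∀ j, Tendsto (Mj j) atTop (nhds (MjTop j)))
    (hVj_top : ∀ j, Tendsto (Vj j) atTop (nhds (VjTop j)))
    (cc5a : ∀ j, MjTop j ≤ VjTop j)
    (cc5b : uTop ≠ 0 → ∀ j, LjBot j ≤ UjBot j) :
    Antitone (fun x =>
      W x * ∑ j, (extCDF φ (Vj j x) - extCDF φ (Mj j x))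
        - U x * ∑ j, (extCDF φ (Uj j x) - extCDF φ (Lj j x))) := by
  have hφm := extCDF_mono hφ
  set S := fun x => ∑ j, (extCDF φ (Vj j x) - extCDF φ (Mj j x)) with hS
  set T := fun x => ∑ j, (extCDF φ (Uj j x) - extCDF φ (Lj j x)) with hT
  have hS0 : ∀ x, 0 ≤ S x := by
    intro x
    apply Finset.sum_nonneg
    intro j _
    have : Mj j x ≤ Vj j x :=
      le_trans ((cc2Mj j).ge_of_tendsto (hMj_top j) x)
        (le_trans (cc5a j) ((cc2Vj j).le_of_tendsto (hVj_top j) x))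
    linarith [hφm this]
  have hSanti : Antitone S := by
    intro a b hab
    apply Finset.sum_le_sum
    intro j _
    have h1 := hφm (cc2Vj j hab)
    have h2 := hφm (cc2Mj j hab)
    linarith
  have hA : Antitone (fun x => W x * S x) := by
    intro a b hab
    calc W b * S b ≤ W a * S b := mul_le_mul_of_nonneg_right (cc2W hab) (hS0 b)
      _ ≤ W a * S a := mul_le_mul_of_nonneg_left (hSanti hab) (cc1W a)
  have hB : Monotone (fun x => U x * T x) := by
    rcases eq_or_ne uTop 0 with h0 | h0
    · have hU0 : ∀ x, U x = 0 := fun x =>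
        le_antisymm (h0 ▸ cc2U.ge_of_tendsto hU_top x) (cc1U x)
      intro a b _
      simp [hU0]
    · have hT0 : ∀ x, 0 ≤ T x := by
        intro x
        apply Finset.sum_nonneg
        intro j _
        have : Lj j x ≤ Uj j x :=
          le_trans ((cc2Lj j).ge_of_tendsto (hLj_bot j) x)
            (le_trans (cc5b h0 j) ((cc2Uj j).le_of_tendsto (hUj_bot j) x))
        linarith [hφm this]
      have hTmono : Monotone T := by
        intro a b hab
        apply Finset.sum_le_sum
        intro j _
        have h1 := hφm (cc2Uj j hab)
        have h2 := hφm (cc2Lj j hab)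
        linarith
      intro a b hab
      calc U a * T a ≤ U b * T a := mul_le_mul_of_nonneg_right (cc2U hab) (hT0 a)
        _ ≤ U b * T b := mul_le_mul_of_nonneg_left (hTmono hab) (cc1U b)
  intro a b hab
  exact sub_le_sub (hA hab) (hB hab)
end
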